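/- Let K be a field of characteristic zero, R = K[x,y,z], and let a ≥ c ≥ 2 and α ∈ {1,2} be integers. Let G = R/(x^a, y^3 − x^α z^{3−α}, z^c) and set k = ⌊(a+c)/2⌋. Then h_G(k) = 3c−2 if a = c, h_G(k) = 3c−1 if a = c+1, and h_G(k) = 3c if a ≥ c+2. Moreover, if a ≥ c+4, then h_G(k) = h_G(k−1). -/

import Mathlib

/-!
In `K[x,y,z]/(x^a, y^b - x^α z^β, z^c)` with `α + β = b`, the classes of the monomials
`x^i y^j z^l` with `i < a`, `j < b`, `l < c` form a `K`-basis. They span, since `y^b ≡ x^α z^β`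
lowers the exponent of `y` without changing the degree. They are linearly independent, since they
map to the tower basis of `K[x]/(x^a)[z]/(z^c)[y]/(y^b - x^α z^β)`, built from three power bases.
Hence `h(n)` counts the lattice points of the box `[0,a) × [0,b) × [0,c)` on the plane
`i + j + l = n`, and for `b = 3` these counts are elementary.
-/

open MvPolynomial

/-- The degree-`i` graded component of `R/I`, i.e. the image in `R/I` of the
space of homogeneous polynomials of degree `i`. -/
noncomputable def grComponent (K : Type*) [Field K]
    (I : Ideal (MvPolynomial (Fin 3) K)) (i : ℕ) :
    Submodule K (MvPolynomial (Fin 3) K ⧸ I) :=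
  (MvPolynomial.homogeneousSubmodule (Fin 3) K i).map
    (Ideal.Quotient.mkₐ K I).toLinearMap

/-- The Hilbert function of `R/I`. -/
noncomputable def hilb (K : Type*) [Field K]
    (I : Ideal (MvPolynomial (Fin 3) K)) (i : ℕ) : ℕ :=
  Module.finrank K (grComponent K I i)

/-- `R/I` has the weak Lefschetz property: there is a linear form `L` such that
for every `i`, multiplication by `L` from `[R/I]_i` to `[R/I]_{i+1}` is
injective or surjective. -/
def hasWLP (K : Type*) [Field K] (I : Ideal (MvPolynomial (Fin 3) K)) : Prop :=
  ∃ L : MvPolynomial (Fin 3) K, L.IsHomogeneous 1 ∧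
    ∀ i : ℕ,
      (∀ u ∈ grComponent K I i, ∀ v ∈ grComponent K I i,
          Ideal.Quotient.mk I L * u = Ideal.Quotient.mk I L * v → u = v) ∨
      (∀ w ∈ grComponent K I (i + 1), ∃ u ∈ grComponent K I i,
          Ideal.Quotient.mk I L * u = w)

namespace AdjoinRoot

variable {R : Type*} [CommRing R] {g : Polynomial R}

theorem nontrivial_of_monic [Nontrivial R] (hg : g.Monic) (h : g.natDegree ≠ 0) :
    Nontrivial (AdjoinRoot g) :=
  Ideal.Quotient.nontrivial_iff.mpr fun htop =>
    h (by rw [hg.isUnit_iff.mp (Ideal.span_singleton_eq_top.mp htop), Polynomial.natDegree_one])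

noncomputable def basisOfNatDegreeEq (hg : g.Monic) {n : ℕ} (hn : g.natDegree = n) :
    Module.Basis (Fin n) R (AdjoinRoot g) :=
  (powerBasis' hg).basis.reindex (finCongr hn)

theorem basisOfNatDegreeEq_apply (hg : g.Monic) {n : ℕ} (hn : g.natDegree = n) (i : Fin n) :
    basisOfNatDegreeEq hg hn i = root g ^ (i : ℕ) := by
  rw [basisOfNatDegreeEq, Module.Basis.reindex_apply, PowerBasis.basis_eq_pow]
  rfl

theorem root_X_pow_pow (n : ℕ) : root (Polynomial.X ^ n : Polynomial R) ^ n = 0 := by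
  have h := mk_self (f := (Polynomial.X ^ n : Polynomial R))
  rwa [map_pow, mk_X] at h

end AdjoinRoot

theorem MvPolynomial.homogeneousSubmodule_eq_span_monomial (σ R : Type*) [CommSemiring R]
    (n : ℕ) : homogeneousSubmodule σ R n =
      Submodule.span R ((fun d => monomial d (1 : R)) '' {d : σ →₀ ℕ | d.degree = n}) := by
  rw [homogeneousSubmodule_eq_finsupp_supported, AddMonoidAlgebra.supported_eq_span_single]
  rfl

noncomputable section

def ciIdeal (R : Type*) [CommRing R] (a b c α β : ℕ) : Ideal (MvPolynomial (Fin 3) R) :=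
  Ideal.span {X 0 ^ a, X 1 ^ b - X 0 ^ α * X 2 ^ β, X 2 ^ c}

def xyzMonomial (R : Type*) [CommRing R] (p : ℕ × ℕ × ℕ) : MvPolynomial (Fin 3) R :=
  X 0 ^ p.1 * X 1 ^ p.2.1 * X 2 ^ p.2.2

namespace CIModel

variable (R : Type*) [CommRing R] (a b c α β : ℕ)

abbrev TruncX := AdjoinRoot (Polynomial.X ^ a : Polynomial R)

abbrev TruncXZ := AdjoinRoot (Polynomial.X ^ c : Polynomial (TruncX R a))

def genX : TruncXZ R a c := algebraMap (TruncX R a) _ (AdjoinRoot.root _)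

def genZ : TruncXZ R a c := AdjoinRoot.root _

abbrev Model :=
  AdjoinRoot (Polynomial.X ^ b - Polynomial.C (genX R a c ^ α * genZ R a c ^ β))

def x : Model R a b c α β := algebraMap _ _ (genX R a c)

def y : Model R a b c α β := AdjoinRoot.root _

def z : Model R a b c α β := algebraMap _ _ (genZ R a c)

theorem x_pow : x R a b c α β ^ a = 0 := by
  simp only [x, genX, ← map_pow, AdjoinRoot.root_X_pow_pow, map_zero]

theorem z_pow : z R a b c α β ^ c = 0 := by
  simp only [z, genZ, ← map_pow, AdjoinRoot.root_X_pow_pow, map_zero]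

theorem y_pow : y R a b c α β ^ b = x R a b c α β ^ α * z R a b c α β ^ β := by
  have h := AdjoinRoot.mk_self
    (f := Polynomial.X ^ b - Polynomial.C (genX R a c ^ α * genZ R a c ^ β))
  rw [map_sub, map_pow, AdjoinRoot.mk_X, AdjoinRoot.mk_C, sub_eq_zero] at h
  rw [y, h, x, z, map_mul, map_pow, map_pow]
  rfl

def toModel : MvPolynomial (Fin 3) R →ₐ[R] Model R a b c α β :=
  aeval ![x R a b c α β, y R a b c α β, z R a b c α β]

theorem toModel_xyzMonomial (p : ℕ × ℕ × ℕ) : toModel R a b c α β (xyzMonomial R p) =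
    x R a b c α β ^ p.1 * y R a b c α β ^ p.2.1 * z R a b c α β ^ p.2.2 := by
  simp [toModel, xyzMonomial]

theorem ciIdeal_le_ker_toModel :
    ciIdeal R a b c α β ≤ RingHom.ker (toModel R a b c α β) := by
  rw [ciIdeal, Ideal.span_le]
  rintro q (rfl | rfl | rfl) <;> simp [toModel, x_pow, y_pow, z_pow]

variable {a b c}

def basis [Nontrivial R] (ha : a ≠ 0) (hb : b ≠ 0) (hc : c ≠ 0) :
    Module.Basis ((Fin a × Fin c) × Fin b) R (Model R a b c α β) :=
  haveI : Nontrivial (TruncX R a) := AdjoinRoot.nontrivial_of_monic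
    (Polynomial.monic_X_pow a) (by rwa [Polynomial.natDegree_X_pow])
  haveI : Nontrivial (TruncXZ R a c) := AdjoinRoot.nontrivial_of_monic
    (Polynomial.monic_X_pow c) (by rwa [Polynomial.natDegree_X_pow])
  ((AdjoinRoot.basisOfNatDegreeEq (Polynomial.monic_X_pow a)
      (Polynomial.natDegree_X_pow a)).smulTower
    (AdjoinRoot.basisOfNatDegreeEq (Polynomial.monic_X_pow c)
      (Polynomial.natDegree_X_pow c))).smulTower
    (AdjoinRoot.basisOfNatDegreeEq (Polynomial.monic_X_pow_sub_C _ hb)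
      Polynomial.natDegree_X_pow_sub_C)

theorem basis_apply [Nontrivial R] (ha : a ≠ 0) (hb : b ≠ 0) (hc : c ≠ 0)
    (i : Fin a) (l : Fin c) (j : Fin b) :
    basis R α β ha hb hc ((i, l), j) = toModel R a b c α β (xyzMonomial R (i, j, l)) := by
  rw [basis, Module.Basis.smulTower_apply, Module.Basis.smulTower_apply,
    AdjoinRoot.basisOfNatDegreeEq_apply, AdjoinRoot.basisOfNatDegreeEq_apply,
    AdjoinRoot.basisOfNatDegreeEq_apply, toModel_xyzMonomial, Algebra.smul_def, Algebra.smul_def]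
  simp only [x, y, z, genX, genZ, map_mul, map_pow]
  exact mul_right_comm _ _ _

end CIModel

theorem monomial_one_eq_xyzMonomial (R : Type*) [CommRing R] (d : Fin 3 →₀ ℕ) :
    monomial d (1 : R) = xyzMonomial R (d 0, d 1, d 2) := by
  rw [monomial_eq, C_1, one_mul, Finsupp.prod_fintype _ _ (fun _ => pow_zero _),
    Fin.prod_univ_three, xyzMonomial]

theorem isHomogeneous_xyzMonomial (R : Type*) [CommRing R] (p : ℕ × ℕ × ℕ) :
    (xyzMonomial R p).IsHomogeneous (p.1 + p.2.1 + p.2.2) :=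
  ((isHomogeneous_X_pow 0 p.1).mul (isHomogeneous_X_pow 1 p.2.1)).mul
    (isHomogeneous_X_pow 2 p.2.2)

def box (a b c : ℕ) : Finset (ℕ × ℕ × ℕ) :=
  Finset.range a ×ˢ Finset.range b ×ˢ Finset.range c

def boxSlice (a b c n : ℕ) : Finset (ℕ × ℕ × ℕ) :=
  (box a b c).filter fun p => p.1 + p.2.1 + p.2.2 = n

def xyzClass (R : Type*) [CommRing R] (a b c α β : ℕ) (p : ℕ × ℕ × ℕ) :
    MvPolynomial (Fin 3) R ⧸ ciIdeal R a b c α β :=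
  Ideal.Quotient.mk _ (xyzMonomial R p)

section Quotient

variable {R : Type*} [CommRing R] {a b c α β : ℕ}

theorem xyzClass_eq_zero_of_a_le {i : ℕ} (j l : ℕ) (h : a ≤ i) :
    xyzClass R a b c α β (i, j, l) = 0 := by
  rw [xyzClass, Ideal.Quotient.eq_zero_iff_mem]
  have hgen : (X 0 ^ a : MvPolynomial (Fin 3) R) ∈ ciIdeal R a b c α β :=
    Ideal.subset_span (by simp)
  exact Ideal.mem_of_dvd _ (((pow_dvd_pow _ h).mul_right _).mul_right _) hgen

theorem xyzClass_eq_zero_of_c_le (i j : ℕ) {l : ℕ} (h : c ≤ l) :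
    xyzClass R a b c α β (i, j, l) = 0 := by
  rw [xyzClass, Ideal.Quotient.eq_zero_iff_mem]
  have hgen : (X 2 ^ c : MvPolynomial (Fin 3) R) ∈ ciIdeal R a b c α β :=
    Ideal.subset_span (by simp)
  exact Ideal.mem_of_dvd _ ((pow_dvd_pow _ h).mul_left _) hgen

theorem xyzClass_eq_of_b_le (i : ℕ) {j : ℕ} (l : ℕ) (h : b ≤ j) :
    xyzClass R a b c α β (i, j, l) = xyzClass R a b c α β (i + α, j - b, l + β) := by
  rw [xyzClass, xyzClass, Ideal.Quotient.eq]
  obtain ⟨j, rfl⟩ := Nat.exists_eq_add_of_le h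
  have hdiff : xyzMonomial R (i, b + j, l) - xyzMonomial R (i + α, b + j - b, l + β) =
      (X 1 ^ b - X 0 ^ α * X 2 ^ β) * xyzMonomial R (i, j, l) := by
    simp only [xyzMonomial, Nat.add_sub_cancel_left, pow_add]
    ring
  rw [hdiff]
  exact Ideal.mul_mem_right _ _ (Ideal.subset_span (by simp))

theorem xyzClass_mem_span_boxSlice (hb : b ≠ 0) (hαβ : α + β = b) {n : ℕ} (i j l : ℕ)
    (h : i + j + l = n) :
    xyzClass R a b c α β (i, j, l) ∈
      Submodule.span R (xyzClass R a b c α β '' boxSlice a b c n) := by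
  induction j using Nat.strong_induction_on generalizing i l with
  | _ j ih =>
    by_cases hi : a ≤ i
    · rw [xyzClass_eq_zero_of_a_le j l hi]
      exact zero_mem _
    by_cases hl : c ≤ l
    · rw [xyzClass_eq_zero_of_c_le i j hl]
      exact zero_mem _
    by_cases hj : b ≤ j
    · rw [xyzClass_eq_of_b_le i l hj]
      exact ih (j - b) (by omega) _ _ (by omega)
    · refine Submodule.subset_span ⟨(i, j, l), Finset.mem_filter.mpr ⟨?_, h⟩, rfl⟩
      simp only [box, Finset.mem_product, Finset.mem_range]
      omega

theorem grComponent_ciIdeal {K : Type*} [Field K] (hb : b ≠ 0) (hαβ : α + β = b) (n : ℕ) :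
    grComponent K (ciIdeal K a b c α β) n =
      Submodule.span K (xyzClass K a b c α β '' boxSlice a b c n) := by
  apply le_antisymm
  · rw [grComponent, homogeneousSubmodule_eq_span_monomial, Submodule.map_span, Submodule.span_le]
    rintro _ ⟨_, ⟨d, hd, rfl⟩, rfl⟩
    dsimp only
    rw [Set.mem_ofPred_eq, Finsupp.degree_eq_sum, Fin.sum_univ_three] at hd
    rw [AlgHom.toLinearMap_apply, Ideal.Quotient.mkₐ_eq_mk, monomial_one_eq_xyzMonomial]
    exact xyzClass_mem_span_boxSlice hb hαβ _ _ _ hd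
  · rw [Submodule.span_le]
    rintro _ ⟨p, hp, rfl⟩
    simp only [boxSlice, Finset.coe_filter, Set.mem_ofPred_eq] at hp
    exact ⟨xyzMonomial K p, hp.2 ▸ isHomogeneous_xyzMonomial K p, rfl⟩

theorem linearIndepOn_xyzClass_box [Nontrivial R] (ha : a ≠ 0) (hb : b ≠ 0) (hc : c ≠ 0) :
    LinearIndepOn R (xyzClass R a b c α β) (box a b c) := by
  let e : (Fin a × Fin c) × Fin b → ℕ × ℕ × ℕ := fun q => (q.1.1, q.2, q.1.2)
  have he : Function.Injective e := by
    rintro ⟨⟨i, l⟩, j⟩ ⟨⟨i', l'⟩, j'⟩ h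
    simp_all [e, Fin.val_inj]
  have hbox : (box a b c : Set (ℕ × ℕ × ℕ)) ⊆ Set.range e := by
    rintro ⟨i, j, l⟩ hp
    simp only [box, Finset.coe_product, Set.mem_prod, Finset.coe_range, Set.mem_Iio] at hp
    exact ⟨((⟨i, hp.1⟩, ⟨l, hp.2.2⟩), ⟨j, hp.2.1⟩), rfl⟩
  refine LinearIndepOn.mono ?_ hbox
  rw [linearIndepOn_range_iff he]
  refine LinearIndependent.of_comp (Ideal.Quotient.liftₐ _ (CIModel.toModel R a b c α β)
    fun _ hp => RingHom.mem_ker.mp (CIModel.ciIdeal_le_ker_toModel R a b c α β hp)).toLinearMap ?_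
  convert (CIModel.basis R α β ha hb hc).linearIndependent
  ext ⟨⟨i, l⟩, j⟩
  simp only [Function.comp_apply, CIModel.basis_apply, xyzClass, e, AlgHom.toLinearMap_apply]
  exact Ideal.Quotient.lift_mk _ _ _

theorem hilb_ciIdeal {K : Type*} [Field K] (ha : a ≠ 0) (hb : b ≠ 0) (hc : c ≠ 0)
    (hαβ : α + β = b) (n : ℕ) :
    hilb K (ciIdeal K a b c α β) n = (boxSlice a b c n).card := by
  classical
  have hli : LinearIndepOn K (xyzClass K a b c α β) (boxSlice a b c n) :=
    (linearIndepOn_xyzClass_box ha hb hc).mono (Finset.coe_subset.mpr (Finset.filter_subset _ _))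
  have hli' : LinearIndepOn K id
      (↑((boxSlice a b c n).image (xyzClass K a b c α β)) :
        Set (MvPolynomial (Fin 3) K ⧸ ciIdeal K a b c α β)) := by
    rw [Finset.coe_image]
    exact hli.id_image
  rw [hilb, grComponent_ciIdeal hb hαβ, ← Finset.coe_image, finrank_span_finset_eq_card hli',
    Finset.card_image_of_injOn hli.injOn]

end Quotient

theorem card_boxSlice (a b c n : ℕ) : (boxSlice a b c n).card =
    ((Finset.range b ×ˢ Finset.range c).filter
      fun q => q.1 + q.2 ≤ n ∧ n < q.1 + q.2 + a).card := by
  refine Finset.card_nbij' (fun p => (p.2.1, p.2.2)) (fun q => (n - q.1 - q.2, q.1, q.2))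
    ?_ ?_ ?_ ?_ <;>
  simp only [boxSlice, box, Set.MapsTo, Set.LeftInvOn, Finset.coe_filter, Finset.mem_product,
    Finset.mem_range, Set.mem_ofPred_eq, Prod.forall, Prod.mk.injEq, and_true, implies_true] <;>
  intros <;> omega

theorem card_boxSlice_of_le_of_lt {a b c n : ℕ} (hn : b + c ≤ n + 2) (ha : n < a) :
    (boxSlice a b c n).card = b * c := by
  rw [card_boxSlice, Finset.filter_true_of_mem, Finset.card_product, Finset.card_range,
    Finset.card_range]
  simp only [Finset.mem_product, Finset.mem_range, Prod.forall]
  omega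

theorem card_boxSlice_three_self {c : ℕ} (hc : c ≠ 0) :
    (boxSlice c 3 c c).card = 3 * c - 2 := by
  have hfilter : (Finset.range 3 ×ˢ Finset.range c).filter
      (fun q => q.1 + q.2 ≤ c ∧ c < q.1 + q.2 + c) =
      Finset.range 3 ×ˢ Finset.range c \ {(0, 0), (2, c - 1)} := by
    ext ⟨j, l⟩
    simp only [Finset.mem_filter, Finset.mem_sdiff, Finset.mem_product, Finset.mem_range,
      Finset.mem_insert, Finset.mem_singleton, Prod.mk.injEq]
    omega
  rw [card_boxSlice, hfilter, Finset.card_sdiff_of_subset, Finset.card_product, Finset.card_range,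
    Finset.card_range, Finset.card_pair (by simp)]
  simp only [Finset.insert_subset_iff, Finset.singleton_subset_iff, Finset.mem_product,
    Finset.mem_range]
  omega

theorem card_boxSlice_three_succ_self {c : ℕ} (hc : c ≠ 0) :
    (boxSlice (c + 1) 3 c c).card = 3 * c - 1 := by
  have hfilter : (Finset.range 3 ×ˢ Finset.range c).filter
      (fun q => q.1 + q.2 ≤ c ∧ c < q.1 + q.2 + (c + 1)) =
      Finset.range 3 ×ˢ Finset.range c \ {(2, c - 1)} := by
    ext ⟨j, l⟩
    simp only [Finset.mem_filter, Finset.mem_sdiff, Finset.mem_product, Finset.mem_range,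
      Finset.mem_singleton, Prod.mk.injEq]
    omega
  rw [card_boxSlice, hfilter, Finset.card_sdiff_of_subset, Finset.card_product, Finset.card_range,
    Finset.card_range, Finset.card_singleton]
  simp only [Finset.singleton_subset_iff, Finset.mem_product, Finset.mem_range]
  omega

end

theorem stmt_9_general (K : Type*) [Field K] (a c α : ℕ)
    (hc : 2 ≤ c) (hac : c ≤ a) (hα : α = 1 ∨ α = 2) :
    let I : Ideal (MvPolynomial (Fin 3) K) := Ideal.span
      {(X 0 : MvPolynomial (Fin 3) K) ^ a, X 1 ^ 3 - X 0 ^ α * X 2 ^ (3 - α), X 2 ^ c}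
    let k : ℕ := (a + c) / 2
    ((a = c → hilb K I k = 3 * c - 2) ∧
     (a = c + 1 → hilb K I k = 3 * c - 1) ∧
     (c + 2 ≤ a → hilb K I k = 3 * c) ∧
     (c + 4 ≤ a → hilb K I k = hilb K I (k - 1))) := by
  intro I k
  have hilb_eq (n : ℕ) : hilb K I n = (boxSlice a 3 c n).card :=
    hilb_ciIdeal (by omega) three_ne_zero (by omega) (by omega) n
  refine ⟨fun h => ?_, fun h => ?_, fun h => ?_, fun h => ?_⟩
  · subst h
    rw [hilb_eq, show k = a by omega, card_boxSlice_three_self (by omega)]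
  · subst h
    rw [hilb_eq, show k = c by omega, card_boxSlice_three_succ_self (by omega)]
  · rw [hilb_eq, card_boxSlice_of_le_of_lt (by omega) (by omega)]
  · rw [hilb_eq, hilb_eq, card_boxSlice_of_le_of_lt (by omega) (by omega),
      card_boxSlice_of_le_of_lt (by omega) (by omega)]

theorem stmt_9 (K : Type*) [Field K] [CharZero K] (a c α : ℕ)
    (hc : 2 ≤ c) (hac : c ≤ a) (hα : α = 1 ∨ α = 2) :
    let I : Ideal (MvPolynomial (Fin 3) K) := Ideal.span
      {(X 0 : MvPolynomial (Fin 3) K) ^ a, X 1 ^ 3 - X 0 ^ α * X 2 ^ (3 - α), X 2 ^ c}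
    let k : ℕ := (a + c) / 2
    ((a = c → hilb K I k = 3 * c - 2) ∧
     (a = c + 1 → hilb K I k = 3 * c - 1) ∧
     (c + 2 ≤ a → hilb K I k = 3 * c) ∧
     (c + 4 ≤ a → hilb K I k = hilb K I (k - 1))) :=
  stmt_9_general K a c α hc hac hα
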